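/- arXiv:1605.00431 — 8 statements merged into one kernel-verified Lean document; each statement's English description precedes it below -/
import Mathlib

section
/- Let εX, εY ∈ (−1, 1) and let z₁ ∈ ℂ be the complex number z₁ := (−3 + εX·εY) − √3·|εX + εY|·i. Then Re(z₁) < 0 and Im(z₁) ≤ 0, and for the principal complex power w := z₁^{1/2} one has Re(w) ≥ 0, with Re(w) = 0 if and only if εX + εY = 0. (This is the dichotomy for the eigenvalues ±(1/3)·z₁^{1/2} of the linearization at the Nash equilibrium: they are purely imaginary exactly in the zero-sum case εX + εY = 0.) -/
theorem stmt3 (εX εY : ℝ) (hX : εX ∈ Set.Ioo (-1:ℝ) 1) (hY : εY ∈ Set.Ioo (-1:ℝ) 1) :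
    ∀ z₁ : ℂ, z₁ = ((-3 + εX * εY : ℝ) : ℂ) - ((Real.sqrt 3 * |εX + εY| : ℝ) : ℂ) * Complex.I →
      z₁.re < 0 ∧ z₁.im ≤ 0 ∧ 0 ≤ (z₁ ^ ((1:ℂ)/2)).re ∧
        ((z₁ ^ ((1:ℂ)/2)).re = 0 ↔ εX + εY = 0) := by
  rintro z₁ rfl
  obtain ⟨hX1, hX2⟩ := hX
  obtain ⟨hY1, hY2⟩ := hY
  have hsq3 : (0:ℝ) < Real.sqrt 3 := Real.sqrt_pos.mpr (by norm_num)
  have hre : (-3 + εX * εY : ℝ) < 0 := by nlinarith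
  set z : ℂ := ((-3 + εX * εY : ℝ) : ℂ) - ((Real.sqrt 3 * |εX + εY| : ℝ) : ℂ) * Complex.I
    with hz
  have hzre : z.re = -3 + εX * εY := by simp [hz]
  have hzim : z.im = -(Real.sqrt 3 * |εX + εY|) := by simp [hz]
  have hzne : z ≠ 0 := by
    intro h
    rw [h] at hzre
    simp at hzre; linarith
  have him : z.im ≤ 0 := by
    rw [hzim]
    have := abs_nonneg (εX + εY)
    nlinarith
  refine ⟨by rw [hzre]; exact hre, him, ?_, ?_⟩
  · -- re of cpow
    rw [Complex.cpow_def_of_ne_zero hzne, Complex.exp_re]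
    apply mul_nonneg (Real.exp_pos _).le
    apply Real.cos_nonneg_of_mem_Icc
    have h1 := Complex.neg_pi_lt_arg z
    have h2 := Complex.arg_le_pi z
    constructor <;> · simp [Complex.log_im, Complex.log_re]; linarith
  · rw [Complex.cpow_def_of_ne_zero hzne, Complex.exp_re]
    have hexp : Real.exp ((Complex.log z * (1 / 2)).re) ≠ 0 := (Real.exp_pos _).ne'
    rw [mul_eq_zero, or_iff_right hexp]
    have him' : (Complex.log z * ((1:ℂ) / 2)).im = z.arg / 2 := by
      simp [Complex.log_im]; ring
    rw [him']
    constructor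
    · intro h
      have h1 := Complex.neg_pi_lt_arg z
      have h2 := Complex.arg_le_pi z
      have hpi : z.arg = Real.pi := by
        by_contra hne
        have : 0 < Real.cos (z.arg / 2) := by
          apply Real.cos_pos_of_mem_Ioo
          constructor <;> [linarith; (have := lt_of_le_of_ne h2 hne; linarith)]
        linarith [h ▸ this]
      have := Complex.arg_eq_pi_iff.mp hpi
      have him0 := this.2
      rw [hzim] at him0
      have : |εX + εY| = 0 := by
        rcases mul_eq_zero.mp (neg_eq_zero.mp him0) with h | h
        · exact absurd h hsq3.ne'
        · exact h
      exact abs_eq_zero.mp this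
    · intro h
      have hpi : z.arg = Real.pi := by
        apply Complex.arg_eq_pi_iff.mpr
        refine ⟨by rw [hzre]; exact hre, ?_⟩
        rw [hzim, h]; simp
      rw [hpi]
      simp
end

section
/- Let εX, εY be real numbers with εX + εY = 0, and set A := M(εX), B := M(εY). Then B = −Aᵀ, and for all x, y ∈ ℝ³ whose coordinates each sum to 1: ∑_{i=1}^{3} (A y)_i = 0, ∑_{j=1}^{3} (B x)_j = 0, and (1/3)·∑_{i=1}^{3}((A y)_i − x ⬝ A y) + (1/3)·∑_{j=1}^{3}((B x)_j − y ⬝ B x) = 0. In other words, the derivative of V(x,y) = (1/3)∑ log x_i + (1/3)∑ log y_j along the replicator flow vanishes identically in the zero-sum case. -/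
open Matrix

noncomputable def M (ε : ℝ) : Matrix (Fin 3) (Fin 3) ℝ :=
  !![2*ε/3, 1 - ε/3, -1 - ε/3;
     -1 - ε/3, 2*ε/3, 1 - ε/3;
     1 - ε/3, -1 - ε/3, 2*ε/3]

theorem stmt4 (εX εY : ℝ) (h : εX + εY = 0) :
    M εY = -(M εX)ᵀ ∧
    ∀ x y : Fin 3 → ℝ, (∑ i, x i) = 1 → (∑ i, y i) = 1 →
      (∑ i, (M εX).mulVec y i) = 0 ∧
      (∑ j, (M εY).mulVec x j) = 0 ∧
      (1/3 : ℝ) * (∑ i, ((M εX).mulVec y i - x ⬝ᵥ (M εX).mulVec y)) +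
        (1/3 : ℝ) * (∑ j, ((M εY).mulVec x j - y ⬝ᵥ (M εY).mulVec x)) = 0 := by
  have hY : εY = -εX := by linarith
  subst hY
  constructor
  · ext i j
    rw [Matrix.neg_apply, Matrix.transpose_apply]
    fin_cases i <;> fin_cases j <;> simp [M] <;> ring
  · intro x y hx hy
    simp only [Fin.sum_univ_three] at hx hy ⊢
    simp only [M, mulVec, dotProduct, Fin.sum_univ_three, Matrix.cons_val', Matrix.cons_val_zero,
      Matrix.cons_val_one, Matrix.head_cons, Matrix.empty_val', Matrix.cons_val_fin_one,
      Matrix.head_fin_const, Matrix.cons_val_two, Matrix.tail_cons, Matrix.of_apply]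
    refine ⟨by ring, by ring, ?_⟩
    linear_combination (εX * (y 0 + y 1 + y 2) - εX) * hx - εX * hy +
      εX * (2 - (x 0 + x 1 + x 2)) * hy
end

section
/- Let εX, εY ∈ (−1, 1). The reduced replicator vector field F vanishes at the point Z^a := (0, 2/(3−εY), (1+εX)/(3+εX), 2/(3+εX)), i.e. F(Z^a) = 0, so Z^a is an equilibrium of the reduced replicator equations. -/
open Matrix

/-- The reduced replicator vector field `F : ℝ⁴ → ℝ⁴`. -/
noncomputable def Fred (εX εY : ℝ) (p : Fin 4 → ℝ) : Fin 4 → ℝ :=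
  let x : Fin 3 → ℝ := ![p 0, p 1, 1 - p 0 - p 1]
  let y : Fin 3 → ℝ := ![p 2, p 3, 1 - p 2 - p 3]
  ![p 0 * ((M εX).mulVec y 0 - x ⬝ᵥ (M εX).mulVec y),
    p 1 * ((M εX).mulVec y 1 - x ⬝ᵥ (M εX).mulVec y),
    p 2 * ((M εY).mulVec x 0 - y ⬝ᵥ (M εY).mulVec x),
    p 3 * ((M εY).mulVec x 1 - y ⬝ᵥ (M εY).mulVec x)]

set_option maxHeartbeats 1600000 in
theorem stmt6 (εX εY : ℝ) (hX : εX ∈ Set.Ioo (-1:ℝ) 1) (hY : εY ∈ Set.Ioo (-1:ℝ) 1) :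
    Fred εX εY ![0, 2/(3-εY), (1+εX)/(3+εX), 2/(3+εX)] = 0 := by
  have hY3 : (3:ℝ) - εY ≠ 0 := by nlinarith [hY.2]
  have hX3 : (3:ℝ) + εX ≠ 0 := by nlinarith [hX.1]
  funext i
  fin_cases i <;> simp [Fred, M, mulVec, dotProduct, Fin.sum_univ_succ] <;>
    field_simp <;> ring_nf <;> tauto
end

section
/- Let εX, εY be real numbers. The characteristic polynomial of the Jacobian matrix J(p) of the reduced replicator vector field F at the point p = (0, 0, 0, 1) (the pure-strategy pair (P,S)) equals (X − 2)·(X − (1+εX))·(X + 2)·(X + (1−εY)). In particular the eigenvalues of J(0,0,0,1) are 2, 1+εX, −2 and −1+εY. -/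
open Matrix Polynomial
set_option maxHeartbeats 1000000

/-- The Jacobian matrix of `F` at `p`. -/
noncomputable def Jac (εX εY : ℝ) (p : Fin 4 → ℝ) : Matrix (Fin 4) (Fin 4) ℝ :=
  fun i j => fderiv ℝ (fun q => Fred εX εY q i) p (Pi.single j 1)

lemma fderiv_coord (i : Fin 4) (p : Fin 4 → ℝ) :
    fderiv ℝ (fun q : Fin 4 → ℝ => q i) p = ContinuousLinearMap.proj i :=
  (ContinuousLinearMap.proj (R := ℝ) (φ := fun _ : Fin 4 => ℝ) i).fderiv

theorem stmt9 (εX εY : ℝ) :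
    (Jac εX εY ![0, 0, 0, 1]).charpoly =
      (X - C (2:ℝ)) * (X - C (1 + εX)) * (X + C (2:ℝ)) * (X + C (1 - εY)) := by
  have e0 : (fun q : Fin 4 → ℝ => Fred εX εY q 0) =
      fun q => q 0 * ((1 - q 0) * ((εX-1)*q 2 + 2*q 3 - (1+εX)*(1 - q 2 - q 3))
        - q 1 * (-2*q 2 + (1+εX)*q 3 + (1-εX)*(1 - q 2 - q 3))) := by
    funext q
    simp [Fred, M, Matrix.mulVec, dotProduct, Fin.sum_univ_succ, mul_eq_mul_left_iff]
    exact Or.inl (by ring)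
  have e1 : (fun q : Fin 4 → ℝ => Fred εX εY q 1) =
      fun q => q 1 * ((1 - q 1) * (-2*q 2 + (1+εX)*q 3 + (1-εX)*(1 - q 2 - q 3))
        - q 0 * ((εX-1)*q 2 + 2*q 3 - (1+εX)*(1 - q 2 - q 3))) := by
    funext q
    simp [Fred, M, Matrix.mulVec, dotProduct, Fin.sum_univ_succ, mul_eq_mul_left_iff]
    exact Or.inl (by ring)
  have e2 : (fun q : Fin 4 → ℝ => Fred εX εY q 2) =
      fun q => q 2 * ((1 - q 2) * ((εY-1)*q 0 + 2*q 1 - (1+εY)*(1 - q 0 - q 1))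
        - q 3 * (-2*q 0 + (1+εY)*q 1 + (1-εY)*(1 - q 0 - q 1))) := by
    funext q
    simp [Fred, M, Matrix.mulVec, dotProduct, Fin.sum_univ_succ, mul_eq_mul_left_iff]
    exact Or.inl (by ring)
  have e3 : (fun q : Fin 4 → ℝ => Fred εX εY q 3) =
      fun q => q 3 * ((1 - q 3) * (-2*q 0 + (1+εY)*q 1 + (1-εY)*(1 - q 0 - q 1))
        - q 2 * ((εY-1)*q 0 + 2*q 1 - (1+εY)*(1 - q 0 - q 1))) := by
    funext q
    simp [Fred, M, Matrix.mulVec, dotProduct, Fin.sum_univ_succ, mul_eq_mul_left_iff]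
    exact Or.inl (by ring)
  have hJ : Jac εX εY ![0, 0, 0, 1] =
      !![2,0,0,0; 0,1+εX,0,0; 0,0,-2,0; 0,0,1+εY, εY - 1] := by
    ext i j
    fin_cases i
    · show fderiv ℝ (fun q => Fred εX εY q 0) ![0,0,0,1] (Pi.single j 1) = _
      rw [e0, fderiv_fun_mul (by fun_prop) (by fun_prop), fderiv_coord 0]
      fin_cases j <;> simp [Pi.single_apply, Matrix.vecHead, Matrix.vecTail] <;> ring
    · show fderiv ℝ (fun q => Fred εX εY q 1) ![0,0,0,1] (Pi.single j 1) = _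
      rw [e1, fderiv_fun_mul (by fun_prop) (by fun_prop), fderiv_coord 1]
      fin_cases j <;> simp [Pi.single_apply, Matrix.vecHead, Matrix.vecTail] <;> ring
    · show fderiv ℝ (fun q => Fred εX εY q 2) ![0,0,0,1] (Pi.single j 1) = _
      rw [e2, fderiv_fun_mul (by fun_prop) (by fun_prop), fderiv_coord 2]
      fin_cases j <;> simp [Pi.single_apply, Matrix.vecHead, Matrix.vecTail] <;> ring
    · show fderiv ℝ (fun q => Fred εX εY q 3) ![0,0,0,1] (Pi.single j 1) = _
      rw [e3, fderiv_fun_mul (by fun_prop) (by fun_prop), fderiv_coord 3,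
        fderiv_fun_sub (by fun_prop) (by fun_prop),
        fderiv_fun_mul (by fun_prop) (by fun_prop),
        fderiv_fun_mul (by fun_prop) (by fun_prop),
        fderiv_coord 2, fderiv_const_sub (1:ℝ), fderiv_coord 3]
      fin_cases j <;> simp [Pi.single_apply, Matrix.vecHead, Matrix.vecTail] <;> ring
  rw [hJ, Matrix.charpoly]
  have hc : charmatrix (!![2,0,0,0; 0,1+εX,0,0; 0,0,-2,0; 0,0,1+εY, εY - 1] :
      Matrix (Fin 4) (Fin 4) ℝ)
      = !![X - C 2, 0, 0, 0; 0, X - C (1+εX), 0, 0; 0, 0, X + C 2, 0;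
           0, 0, -C (1+εY), X - C (εY-1)] := by
    ext i j
    fin_cases i <;> fin_cases j <;>
      simp [charmatrix_apply_eq, charmatrix_apply_ne, Matrix.vecHead, Matrix.vecTail]
  rw [hc]
  simp [Matrix.det_succ_row_zero, Fin.sum_univ_succ]
  ring
end

section
/- Let εY ∈ (−1, 1) and let F be the reduced replicator vector field. For all real y₁, y₂: F₃(0, 0, y₁, y₂) = −y₁·(2y₂ + (1+εY)(1−y₁−y₂)) and F₄(0, 0, y₁, y₂) = y₂·(2y₁ + (1−εY)(1−y₁−y₂)). Consequently, if 0 < y₁ < 1 and 0 ≤ y₂ ≤ 1−y₁ then F₃(0,0,y₁,y₂) < 0, and if 0 < y₂ < 1 and 0 ≤ y₁ ≤ 1−y₂ then F₄(0,0,y₁,y₂) > 0. (This expresses that on the invariant set {x₁ = x₂ = 0} the y-coordinates move monotonically toward the point (P,S) = (0,0,0,1) as long as y₂ ≠ 0.) -/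
open Matrix

lemma key (εX εY y₁ y₂ : ℝ) :
    Fred εX εY ![0, 0, y₁, y₂] 2 = -y₁ * (2*y₂ + (1+εY)*(1-y₁-y₂)) ∧
    Fred εX εY ![0, 0, y₁, y₂] 3 = y₂ * (2*y₁ + (1-εY)*(1-y₁-y₂)) := by
  constructor
  · simp [Fred, M, mulVec, dotProduct, Fin.sum_univ_three]
    ring
  · simp [Fred, M, mulVec, dotProduct, Fin.sum_univ_three]
    ring_nf
    tauto

theorem stmt10 (εX εY : ℝ) (hY : εY ∈ Set.Ioo (-1:ℝ) 1) :
    (∀ y₁ y₂ : ℝ,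
      Fred εX εY ![0, 0, y₁, y₂] 2 = -y₁ * (2*y₂ + (1+εY)*(1-y₁-y₂)) ∧
      Fred εX εY ![0, 0, y₁, y₂] 3 = y₂ * (2*y₁ + (1-εY)*(1-y₁-y₂))) ∧
    (∀ y₁ y₂ : ℝ, 0 < y₁ → y₁ < 1 → 0 ≤ y₂ → y₂ ≤ 1 - y₁ →
      Fred εX εY ![0, 0, y₁, y₂] 2 < 0) ∧
    (∀ y₁ y₂ : ℝ, 0 < y₂ → y₂ < 1 → 0 ≤ y₁ → y₁ ≤ 1 - y₂ →
      0 < Fred εX εY ![0, 0, y₁, y₂] 3) := by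
  obtain ⟨h1, h2⟩ := hY
  refine ⟨fun y₁ y₂ => key εX εY y₁ y₂, ?_, ?_⟩
  · intro y₁ y₂ a b c d
    rw [(key εX εY y₁ y₂).1]
    have hs : (0:ℝ) < 2*y₂ + (1+εY)*(1-y₁-y₂) := by
      rcases eq_or_lt_of_le c with rfl | hc
      · nlinarith
      · nlinarith
    nlinarith
  · intro y₁ y₂ a b c d
    rw [(key εX εY y₁ y₂).2]
    have hs : (0:ℝ) < 2*y₁ + (1-εY)*(1-y₁-y₂) := by
      rcases eq_or_lt_of_le c with rfl | hc
      · nlinarith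
      · nlinarith
    nlinarith
end

section
/- Let εX, εY ∈ (−1, 1), A := M(εX), B := M(εY). Let x = (0, x₂, 1−x₂) ∈ ℝ³ with 0 < x₂ < 1 and let y = (y₁, y₂, y₃) ∈ ℝ³ with y₁, y₂, y₃ ≥ 0 and y₁ + y₂ + y₃ = 1. Then: (a) if x₂ ≤ 1/2 and y₂ < 1, then (B x)₂ − y ⬝ B x > 0 (so ẏ₂ > 0 on {x₁ = 0, x₂ ∈ (0, 1/2]}); (b) if x₂ ≥ 1/2 and y₃ < 1, then (B x)₃ − y ⬝ B x < 0 (so ẏ₃ < 0 on {x₁ = 0, x₂ ∈ [1/2, 1)}); (c) if either (εX < 0 and 0 < y₁ < (1+εX)/(3+εX)) or (εX > 0 and 0 < y₁ < (1−εX)/(3−εX)), then (A y)₂ − x ⬝ A y > 0 (so ẋ₂ > 0). -/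
open Matrix

theorem stmt11 (εX εY : ℝ) (hX : εX ∈ Set.Ioo (-1:ℝ) 1) (hY : εY ∈ Set.Ioo (-1:ℝ) 1)
    (x₂ y₁ y₂ y₃ : ℝ) (hx₂ : 0 < x₂) (hx₂' : x₂ < 1)
    (hy₁ : 0 ≤ y₁) (hy₂ : 0 ≤ y₂) (hy₃ : 0 ≤ y₃) (hysum : y₁ + y₂ + y₃ = 1) :
    ∀ x y : Fin 3 → ℝ, x = ![0, x₂, 1 - x₂] → y = ![y₁, y₂, y₃] →
      (x₂ ≤ 1/2 → y₂ < 1 → 0 < (M εY).mulVec x 1 - y ⬝ᵥ (M εY).mulVec x) ∧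
      (1/2 ≤ x₂ → y₃ < 1 → (M εY).mulVec x 2 - y ⬝ᵥ (M εY).mulVec x < 0) ∧
      (((εX < 0 ∧ 0 < y₁ ∧ y₁ < (1+εX)/(3+εX)) ∨
          (0 < εX ∧ 0 < y₁ ∧ y₁ < (1-εX)/(3-εX))) →
        0 < (M εX).mulVec y 1 - x ⬝ᵥ (M εX).mulVec y) := by
  obtain ⟨hX1, hX2⟩ := hX
  obtain ⟨hY1, hY2⟩ := hY
  have hy3eq : y₃ = 1 - y₁ - y₂ := by linarith
  subst hy3eq
  intro x y hx hy
  subst hx hy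
  simp only [M, mulVec, dotProduct, Fin.sum_univ_three, Matrix.cons_val',
    Matrix.cons_val_zero, Matrix.cons_val_one, Matrix.head_cons, Matrix.empty_val',
    Matrix.cons_val_fin_one, Matrix.cons_val_two, Matrix.tail_cons, Matrix.head_fin_const,
    Matrix.of_apply]
  refine ⟨?_, ?_, ?_⟩
  · intro h1 h2
    have hd1 : 0 < 2 - (3 - εY) * x₂ := by nlinarith
    have hd3 : 0 < (1 + εY) * x₂ + (1 - εY) * (1 - x₂) := by nlinarith
    rcases lt_or_ge 0 y₁ with h | h
    · nlinarith [mul_pos h hd1, mul_nonneg hy₃ hd3.le]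
    · have hy1z : y₁ = 0 := le_antisymm h hy₁
      have : 0 < 1 - y₁ - y₂ := by linarith
      nlinarith [mul_pos this hd3, mul_nonneg hy₁ hd1.le]
  · intro h1 h2
    have he1 : -2 * x₂ + (1 + εY) * (1 - x₂) < 0 := by nlinarith
    have he3 : -((1 + εY) * x₂ + (1 - εY) * (1 - x₂)) < 0 := by nlinarith
    rcases lt_or_ge 0 y₁ with h | h
    · nlinarith [mul_pos_of_neg_of_neg (neg_neg_of_pos h) he1,
        mul_nonneg hy₂ (neg_nonneg.2 he3.le)]
    · have hy1z : y₁ = 0 := le_antisymm h hy₁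
      have hy2p : 0 < y₂ := by linarith
      nlinarith [mul_pos_of_neg_of_neg (neg_neg_of_pos hy2p) he3,
        mul_nonneg hy₁ (neg_nonneg.2 he1.le)]
  · rintro (⟨he, hy1', hy1''⟩ | ⟨he, hy1', hy1''⟩)
    · have h3 : (0:ℝ) < 3 + εX := by linarith
      have key : y₁ * (3 + εX) < 1 + εX := (lt_div_iff₀ h3).mp hy1''
      have hd : 0 < 1 - 3*y₁ + εX*(y₂-(1-y₁-y₂)) := by
        nlinarith [mul_nonneg (neg_nonneg.2 he.le) hy₃]
      nlinarith [mul_pos (sub_pos.2 hx₂') hd]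
    · have h3 : (0:ℝ) < 3 - εX := by linarith
      have key : y₁ * (3 - εX) < 1 - εX := (lt_div_iff₀ h3).mp hy1''
      have hd : 0 < 1 - 3*y₁ + εX*(y₂-(1-y₁-y₂)) := by
        nlinarith [mul_nonneg he.le hy₂]
      nlinarith [mul_pos (sub_pos.2 hx₂') hd]
end

section
/- Let εX, εY ∈ (−1, 1), h ∈ (0, 1) and z₄ > 0. Then ((1−h)/h)^{(1+εX)/2} · h · ( ((1−h)/h)^{(−1+εY)/(−1+εX)} · ( ((1−h)/h)^{−(1+εX)/(1+εY)} · ( (h/(1−h))^{(1−εY)/2} · (z₄/h) )^{2/(1+εY)} )^{(1+εY)/(1−εX)} )^{(1−εX)/2} = z₄, where all powers are real powers of positive reals. (This is the computation showing that the return map within the invariant square ((R,P),(S,P),(S,S),(R,S)) of the heteroclinic network is the identity map.) -/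
theorem stmt12 (εX εY h z₄ : ℝ) (hX : εX ∈ Set.Ioo (-1:ℝ) 1) (hY : εY ∈ Set.Ioo (-1:ℝ) 1)
    (hh : h ∈ Set.Ioo (0:ℝ) 1) (hz₄ : 0 < z₄) :
    ((1-h)/h) ^ ((1+εX)/2) * h *
      ( ((1-h)/h) ^ ((-1+εY)/(-1+εX)) *
        ( ((1-h)/h) ^ (-((1+εX)/(1+εY))) *
          ( (h/(1-h)) ^ ((1-εY)/2) * (z₄/h) ) ^ (2/(1+εY)) ) ^ ((1+εY)/(1-εX))
      ) ^ ((1-εX)/2) = z₄ := by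
  obtain ⟨hX1, hX2⟩ := hX
  obtain ⟨hY1, hY2⟩ := hY
  obtain ⟨h0, h1⟩ := hh
  have hmh : 0 < 1 - h := by linarith
  have ha : (0:ℝ) < (1-h)/h := div_pos hmh h0
  have ha' : (0:ℝ) < h/(1-h) := div_pos h0 hmh
  have hw : 0 < z₄/h := div_pos hz₄ h0
  have hL : 0 <
    ((1-h)/h) ^ ((1+εX)/2) * h *
      ( ((1-h)/h) ^ ((-1+εY)/(-1+εX)) *
        ( ((1-h)/h) ^ (-((1+εX)/(1+εY))) *
          ( (h/(1-h)) ^ ((1-εY)/2) * (z₄/h) ) ^ (2/(1+εY)) ) ^ ((1+εY)/(1-εX))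
      ) ^ ((1-εX)/2) := by positivity
  have key : Real.log (((1-h)/h) ^ ((1+εX)/2) * h *
      ( ((1-h)/h) ^ ((-1+εY)/(-1+εX)) *
        ( ((1-h)/h) ^ (-((1+εX)/(1+εY))) *
          ( (h/(1-h)) ^ ((1-εY)/2) * (z₄/h) ) ^ (2/(1+εY)) ) ^ ((1+εY)/(1-εX))
      ) ^ ((1-εX)/2)) = Real.log z₄ := by
    rw [Real.log_mul (by positivity) (by positivity),
        Real.log_mul (by positivity) (by positivity),
        Real.log_rpow ha, Real.log_rpow (by positivity),
        Real.log_mul (by positivity) (by positivity),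
        Real.log_rpow ha, Real.log_rpow (by positivity),
        Real.log_mul (by positivity) (by positivity),
        Real.log_rpow ha, Real.log_rpow (by positivity),
        Real.log_mul (by positivity) (by positivity),
        Real.log_rpow ha']
    have hlog : Real.log (h/(1-h)) = - Real.log ((1-h)/h) := by
      rw [← Real.log_inv, inv_div]
    have hlz : Real.log (z₄/h) = Real.log z₄ - Real.log h :=
      Real.log_div (ne_of_gt hz₄) (ne_of_gt h0)
    rw [hlog, hlz]
    have e1 : (1:ℝ) + εY ≠ 0 := by linarith
    have e2 : (1:ℝ) - εX ≠ 0 := by linarith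
    have e3 : (-1:ℝ) + εX ≠ 0 := by linarith
    field_simp
    ring
  calc ((1-h)/h) ^ ((1+εX)/2) * h *
      ( ((1-h)/h) ^ ((-1+εY)/(-1+εX)) *
        ( ((1-h)/h) ^ (-((1+εX)/(1+εY))) *
          ( (h/(1-h)) ^ ((1-εY)/2) * (z₄/h) ) ^ (2/(1+εY)) ) ^ ((1+εY)/(1-εX))
      ) ^ ((1-εX)/2) = Real.exp (Real.log _) := (Real.exp_log hL).symm
    _ = z₄ := by rw [key, Real.exp_log hz₄]
end

section
/- For every εX ∈ (−1, 1) there exists h₀ ∈ (0, 1/2) such that for all h ∈ (0, h₀) and all real numbers z₁, z₃ with 0 < z₁ < h·(h/(1−h))^{(3+εX)/(1−εX)} and 0 < z₃ ≤ h, one has ((1−h)/h)^{(1+εX)/2} · (z₃/h)^{(1−εX)/2} · (h − z₁) > h^{−(1−εX)/(1+εX)} · (h/(1−h))^{(1−εX)/(1+εX)} · (z₁·z₃/h)^{2/(1+εX)}. (This is the analytic core of the theorem that finite itineraries of the form tie → win/loss → loss/win → tie along the heteroclinic network are not attainable for h sufficiently small: the necessary transition inequality, which is the reverse non-strict inequality,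 can never be satisfied.) -/
open Real Filter Set

private lemma aux_ev17 {c d : ℝ} (hc : 0 < c) (hd : 0 < d) :
    ∀ᶠ x in nhdsWithin 0 (Set.Ioi 0), x ^ c < d := by
  have h1 : (0:ℝ) < d ^ (1/c) := Real.rpow_pos_of_pos hd _
  filter_upwards [Ioo_mem_nhdsGT_of_mem (Set.mem_Ico.mpr ⟨le_refl 0, h1⟩)] with x hx
  have h2 : x ^ c < (d ^ (1/c)) ^ c := Real.rpow_lt_rpow (le_of_lt hx.1) hx.2 hc
  rwa [← Real.rpow_mul hd.le, one_div, inv_mul_cancel₀ hc.ne', Real.rpow_one] at h2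

theorem stmt17 (εX : ℝ) (hX : εX ∈ Set.Ioo (-1:ℝ) 1) :
    ∃ h₀ ∈ Set.Ioo (0:ℝ) (1/2), ∀ h ∈ Set.Ioo (0:ℝ) h₀, ∀ z₁ z₃ : ℝ,
      0 < z₁ → z₁ < h * (h/(1-h)) ^ ((3+εX)/(1-εX)) →
      0 < z₃ → z₃ ≤ h →
      h ^ (-((1-εX)/(1+εX))) * (h/(1-h)) ^ ((1-εX)/(1+εX)) * (z₁*z₃/h) ^ (2/(1+εX)) <
        ((1-h)/h) ^ ((1+εX)/2) * (z₃/h) ^ ((1-εX)/2) * (h - z₁) := by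
  obtain ⟨hε1, hε2⟩ := hX
  have h1p : (0:ℝ) < 1 + εX := by linarith
  have h1m : (0:ℝ) < 1 - εX := by linarith
  -- notation
  set a : ℝ := (1-εX)/(1+εX) with ha_def
  set p : ℝ := (1+εX)/2 with hp_def
  set q : ℝ := (1-εX)/2 with hq_def
  set r : ℝ := 2/(1+εX) with hr_def
  set b : ℝ := (3+εX)/(1-εX) with hb_def
  have ha : 0 < a := div_pos h1m h1p
  have hp : 0 < p := by unfold p; linarith
  have hq : 0 < q := by unfold q; linarith
  have hr : 0 < r := div_pos (by norm_num) h1p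
  have hb : 0 < b := div_pos (by linarith) h1m
  have hc : 0 < r - q := by
    have : r - q = (3 + εX^2)/(2*(1+εX)) := by
      unfold r q; field_simp; ring
    rw [this]; exact div_pos (by positivity) (by linarith)
  set d : ℝ := (1/2) * ((1/2:ℝ)^a * (1/2:ℝ)^p) / ((1/2:ℝ)^r) with hd_def
  have hd : 0 < d := by
    unfold d
    have := Real.rpow_pos_of_pos (show (0:ℝ) < 1/2 by norm_num) a
    have := Real.rpow_pos_of_pos (show (0:ℝ) < 1/2 by norm_num) p
    have := Real.rpow_pos_of_pos (show (0:ℝ) < 1/2 by norm_num) r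
    positivity
  have h2b : (0:ℝ) < (1/2)/2^b := by
    have := Real.rpow_pos_of_pos (show (0:ℝ) < 2 by norm_num) b
    positivity
  -- eventual conditions
  have Eall : ∀ᶠ h in nhdsWithin (0:ℝ) (Set.Ioi 0),
      h < 1/4 ∧ h ^ b < (1/2)/2^b ∧ h ^ (r - q) < d := by
    filter_upwards [aux_ev17 hb h2b, aux_ev17 hc hd,
      Ioo_mem_nhdsGT_of_mem (Set.mem_Ico.mpr ⟨le_refl (0:ℝ), show (0:ℝ) < 1/4 by norm_num⟩)]
      with x h1 h2 h3
    exact ⟨h3.2, h1, h2⟩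
  rw [Filter.eventually_iff, mem_nhdsGT_iff_exists_Ioo_subset] at Eall
  obtain ⟨u, hu, hsub⟩ := Eall
  refine ⟨min u (1/4), ⟨lt_min hu (by norm_num), lt_of_le_of_lt (min_le_right _ _) (by norm_num)⟩,
    ?_⟩
  rintro h ⟨hh0, hhu⟩ z₁ z₃ hz₁ hz₁b hz₃ hz₃h
  obtain ⟨hh14, hhb, hhrq⟩ := hsub ⟨hh0, lt_of_lt_of_le hhu (min_le_left _ _)⟩
  have hO : (0:ℝ) < 1 - h := by linarith
  have hO2 : (1/2:ℝ) ≤ 1 - h := by linarith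
  have hW0 : (0:ℝ) ≤ (h/(1-h)) ^ b := Real.rpow_nonneg (by positivity) b
  -- W ≤ 1/2
  have hW : (h/(1-h)) ^ b ≤ 1/2 := by
    have h2h : h/(1-h) ≤ 2*h := by
      rw [div_le_iff₀ hO]; nlinarith
    have := Real.rpow_le_rpow (by positivity) h2h hb.le
    have hsplit : ((2*h):ℝ) ^ b = 2^b * h^b := Real.mul_rpow (by norm_num) hh0.le
    have h2bpos : (0:ℝ) < 2^b := Real.rpow_pos_of_pos (by norm_num) b
    calc (h/(1-h)) ^ b ≤ (2*h) ^ b := this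
      _ = 2^b * h^b := hsplit
      _ ≤ 2^b * ((1/2)/2^b) := le_of_lt (mul_lt_mul_of_pos_left hhb h2bpos)
      _ = 1/2 := by field_simp
  -- rewrite LHS
  have hz13 : 0 < z₁ * z₃ / h := by positivity
  have eL : h ^ (-a) * (h/(1-h)) ^ a * (z₁*z₃/h) ^ r
      = z₁^r * z₃^r / ((1-h)^a * h^r) := by
    rw [Real.rpow_neg hh0.le, Real.div_rpow hh0.le hO.le,
      Real.div_rpow (by positivity) hh0.le, Real.mul_rpow hz₁.le hz₃.le]
    have h1 : (h:ℝ)^a ≠ 0 := (Real.rpow_pos_of_pos hh0 a).ne'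
    have h2 : ((1-h):ℝ)^a ≠ 0 := (Real.rpow_pos_of_pos hO a).ne'
    have h3 : (h:ℝ)^r ≠ 0 := (Real.rpow_pos_of_pos hh0 r).ne'
    field_simp
  -- eR
  have eR : ((1-h)/h) ^ p * (z₃/h) ^ q * (h - z₁)
      = (1-h)^p * z₃^q * (h - z₁) / h := by
    rw [Real.div_rpow hO.le hh0.le, Real.div_rpow hz₃.le hh0.le]
    have hpq : h^p * h^q = h := by
      rw [← Real.rpow_add hh0, show p + q = 1 by unfold p q; ring, Real.rpow_one]
    rw [div_mul_div_comm, hpq]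
    ring
  rw [eL, eR, div_lt_div_iff₀ (by positivity) hh0]
  -- bounds
  have hWr : ((h/(1-h))^b) ^ r ≤ ((1/2):ℝ) ^ r :=
    Real.rpow_le_rpow hW0 hW hr.le
  have B1 : z₁ ^ r < h ^ r * ((h/(1-h))^b) ^ r := by
    have := Real.rpow_lt_rpow hz₁.le hz₁b hr
    rwa [Real.mul_rpow hh0.le hW0] at this
  have B2 : z₃ ^ r ≤ z₃ ^ q * h ^ (r - q) := by
    have e : z₃ ^ r = z₃ ^ q * z₃ ^ (r - q) := by
      rw [← Real.rpow_add hz₃, add_sub_cancel]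
    rw [e]
    exact mul_le_mul_of_nonneg_left (Real.rpow_le_rpow hz₃.le hz₃h hc.le)
      (Real.rpow_nonneg hz₃.le q)
  have B3 : h/2 < h - z₁ := by
    have : z₁ < h * (1/2) := lt_of_lt_of_le hz₁b
      (mul_le_mul_of_nonneg_left hW hh0.le)
    linarith
  have B4 : ((h/(1-h))^b) ^ r * h ^ (r - q) ≤ (1/2) * ((1-h)^a * (1-h)^p) := by
    have hOa : ((1/2):ℝ)^a ≤ (1-h)^a := Real.rpow_le_rpow (by norm_num) hO2 ha.le
    have hOp : ((1/2):ℝ)^p ≤ (1-h)^p := Real.rpow_le_rpow (by norm_num) hO2 hp.le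
    have h12r : (0:ℝ) < (1/2:ℝ)^r := Real.rpow_pos_of_pos (by norm_num) r
    calc ((h/(1-h))^b) ^ r * h ^ (r - q) ≤ ((1/2):ℝ)^r * d := by
          apply mul_le_mul hWr hhrq.le (Real.rpow_nonneg hh0.le _) h12r.le
      _ = (1/2) * ((1/2:ℝ)^a * (1/2:ℝ)^p) := by
          rw [hd_def, mul_comm]; exact div_mul_cancel₀ _ h12r.ne'
      _ ≤ (1/2) * ((1-h)^a * (1-h)^p) := by
          have := mul_le_mul hOa hOp (Real.rpow_pos_of_pos (by norm_num) p).le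
            (Real.rpow_pos_of_pos hO a).le
          linarith
  -- final combination
  have hz3q : (0:ℝ) < z₃ ^ q := Real.rpow_pos_of_pos hz₃ q
  have hhr' : (0:ℝ) < h ^ r := Real.rpow_pos_of_pos hh0 r
  have hz3r : (0:ℝ) < z₃ ^ r := Real.rpow_pos_of_pos hz₃ r
  have hhrq' : (0:ℝ) < h ^ (r - q) := Real.rpow_pos_of_pos hh0 _
  have hOa' : (0:ℝ) < (1-h) ^ a := Real.rpow_pos_of_pos hO a
  have hOp' : (0:ℝ) < (1-h) ^ p := Real.rpow_pos_of_pos hO p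
  have hz1r : (0:ℝ) < z₁ ^ r := Real.rpow_pos_of_pos hz₁ r
  calc z₁^r * z₃^r * h
      ≤ z₁ ^ r * (z₃ ^ q * h ^ (r - q)) * h :=
        mul_le_mul_of_nonneg_right (mul_le_mul_of_nonneg_left B2 hz1r.le) hh0.le
    _ < (h ^ r * ((h/(1-h))^b) ^ r) * (z₃ ^ q * h ^ (r - q)) * h :=
        mul_lt_mul_of_pos_right (mul_lt_mul_of_pos_right B1 (by positivity)) hh0
    _ = (((h/(1-h))^b) ^ r * h ^ (r - q)) * (z₃ ^ q * (h ^ r * h)) := by ring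
    _ ≤ ((1/2) * ((1-h)^a * (1-h)^p)) * (z₃ ^ q * (h ^ r * h)) := by
        apply mul_le_mul_of_nonneg_right B4 (by positivity)
    _ = (1-h)^p * z₃^q * (h/2) * ((1-h)^a * h^r) := by ring
    _ ≤ (1-h)^p * z₃^q * (h - z₁) * ((1-h)^a * h^r) := by
        apply mul_le_mul_of_nonneg_right _ (by positivity)
        exact mul_le_mul_of_nonneg_left B3.le (by positivity)
end
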